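/- arXiv:math-ph/0211062 — 4 statements merged into one kernel-verified Lean document; each statement's English description precedes it below -/
import Mathlib

section
/- Fix α ∈ (0, log 3/log 2 − 1). There exist constants J₀ > 0 and L₀ such that for all L ≥ 1, (2/(α(1−α))) · ( −2[(2L−1)^α − (L−1)^α] + (L+1)^α − 1 ) + 2(J₀ − 1) ≥ ζ_α L^α, where ζ_α = 1 − 2(2^α − 1) > 0; in particular the inequality holds for all L once J₀ is chosen large enough. -/
/-!
Write `A = L ^ α`. Bounding `(2L - 1)^α ≤ 2^α A`, `A ≤ (L - 1)^α + 1` (subadditivity of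
`t ↦ t ^ α` for `α ≤ 1`) and `A ≤ (L + 1)^α` shows that the bracket is at least `ζ_α A - 3`.
The condition `α + 1 < log 3 / log 2` says `2^(α + 1) < 3`, i.e. `ζ_α > 0`; it also forces
`α < 1`, so the prefactor `c = 2 / (α (1 - α))` is at least `1`. Hence `c (ζ_α A - 3) ≥ ζ_α A - 3c`,
and `J₀ = 1 + 3c/2` absorbs the constant.
-/

open Real

lemma two_rpow_lt_three_halves {α : ℝ} (hα : α < log 3 / log 2 - 1) :
    (2 : ℝ) ^ α < 3 / 2 := by
  have h : (2 : ℝ) ^ (α + 1) < 3 := by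
    rw [← lt_logb_iff_rpow_lt one_lt_two three_pos, ← log_div_log]
    linarith
  rw [rpow_add_one two_ne_zero] at h
  linarith

lemma lt_one_of_two_rpow_lt_two {α : ℝ} (h : (2 : ℝ) ^ α < 2) : α < 1 := by
  rwa [← rpow_lt_rpow_left_iff one_lt_two, rpow_one]

lemma one_le_two_div_mul_one_sub {α : ℝ} (h0 : 0 < α) (h1 : α < 1) :
    1 ≤ 2 / (α * (1 - α)) := by
  rw [le_div_iff₀ (mul_pos h0 (sub_pos.mpr h1))]
  nlinarith [sq_nonneg (α - 1 / 2)]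

lemma rpow_le_sub_one_rpow_add_one {x α : ℝ} (hx : 1 ≤ x) (h0 : 0 ≤ α) (h1 : α ≤ 1) :
    x ^ α ≤ (x - 1) ^ α + 1 := by
  simpa using rpow_add_le_add_rpow (sub_nonneg.mpr hx) zero_le_one h0 h1

lemma rpow_two_mul_sub_one_le {x α : ℝ} (hx : 1 ≤ x) (h0 : 0 ≤ α) :
    (2 * x - 1) ^ α ≤ 2 ^ α * x ^ α := by
  rw [← mul_rpow zero_le_two (by linarith)]
  exact rpow_le_rpow (by linarith) (by linarith) h0

lemma sub_three_le_block_energy {x α : ℝ} (hx : 1 ≤ x) (h0 : 0 ≤ α) (h1 : α ≤ 1) :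
    (1 - 2 * ((2 : ℝ) ^ α - 1)) * x ^ α - 3 ≤
      -2 * ((2 * x - 1) ^ α - (x - 1) ^ α) + (x + 1) ^ α - 1 := by
  have h2x := rpow_two_mul_sub_one_le hx h0
  have hx1 := rpow_le_sub_one_rpow_add_one hx h0 h1
  have hx2 : x ^ α ≤ (x + 1) ^ α := rpow_le_rpow (by linarith) (by linarith) h0
  linarith

/-- Final step of the lower bound `W_α(L) ≥ ζ_α L^α`: for `J₀` large enough the
explicit expression dominates `ζ_α L^α` for every `L ≥ 1`. -/
theorem final_lower_bound (α : ℝ) (hα0 : 0 < α) (hα1 : α < Real.log 3 / Real.log 2 - 1) :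
    ∃ J₀ : ℝ, 0 < J₀ ∧ ∀ L : ℕ, 1 ≤ L →
      (2 / (α * (1 - α))) *
          (-2 * ((2 * (L : ℝ) - 1) ^ α - ((L : ℝ) - 1) ^ α) + ((L : ℝ) + 1) ^ α - 1)
        + 2 * (J₀ - 1)
      ≥ (1 - 2 * ((2 : ℝ) ^ α - 1)) * (L : ℝ) ^ α := by
  have h2α := two_rpow_lt_three_halves hα1
  have hα_lt_one := lt_one_of_two_rpow_lt_two (by linarith)
  set c := 2 / (α * (1 - α))
  have hc : 1 ≤ c := one_le_two_div_mul_one_sub hα0 hα_lt_one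
  refine ⟨1 + 3 * c / 2, by positivity, fun L hL => ?_⟩
  have hL : (1 : ℝ) ≤ L := by exact_mod_cast hL
  have hbracket := sub_three_le_block_energy hL hα0.le hα_lt_one.le
  have hζA : 0 ≤ (1 - 2 * ((2 : ℝ) ^ α - 1)) * (L : ℝ) ^ α :=
    mul_nonneg (by linarith) (rpow_nonneg (by linarith) α)
  linarith [mul_le_mul_of_nonneg_left hbracket (by linarith : (0 : ℝ) ≤ c),
    mul_nonneg (sub_nonneg.mpr hc) hζA]
end

section
/- For α = 0 (so J(n) = n^{−2} for n > 1), there exists J₁ > 0 such that for all integers L ≥ 1, W_0(L) ≥ 2 ln L + 8, where W_0(L) = Σ_{x=1}^{L}( Σ_{y∈[L+1,2L]∪[−L+1,0]} J(|x−y|) − Σ_{y∈[2L+1,∞)∪(−∞,−L]} J(|x−y|) ). -/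
/-!
The reflection `x ↦ L + 1 - x` exchanges the two halves of the flip energy, so
`W₀(L) = 2 ∑_{a=1}^{L} F(a)` with `F(a) = ∑_{n=a}^{a+L-1} J(n) - ∑_{n ≥ a+L} J(n)`
(`nearMinusFar J L a`). Squeezing `1/n²` between the telescoping differences
`1/n - 1/(n+1)` and `1/(n-1) - 1/n` gives `F(a) ≥ 1/a - 2/L` for `a ≥ 2`, while
`F(1) ≥ J₁ - 1/L`. Summing over `a`, the harmonic sum supplies `log L`, and `J₁ = 7` pays
for the constants.
-/

open Finset

theorem tsum_le_of_le_sub {f u : ℕ → ℝ} (hf : ∀ i, 0 ≤ f i) (hu : ∀ i, 0 ≤ u i)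
    (h : ∀ i, f i ≤ u i - u (i + 1)) : ∑' i, f i ≤ u 0 := by
  refine Real.tsum_le_of_sum_range_le hf fun n => ?_
  calc ∑ i ∈ range n, f i ≤ ∑ i ∈ range n, (u i - u (i + 1)) := sum_le_sum fun i _ => h i
    _ = u 0 - u n := sum_range_sub' u n
    _ ≤ u 0 := sub_le_self _ (hu n)

theorem inv_sub_inv_add_one_le_inv_sq {x : ℝ} (hx : 0 < x) :
    x⁻¹ - (x + 1)⁻¹ ≤ (x ^ 2)⁻¹ := by
  rw [inv_sub_inv hx.ne' (by positivity), add_sub_cancel_left, one_div]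
  exact inv_anti₀ (by positivity) (by nlinarith)

theorem inv_add_one_sq_le_inv_sub_inv {x : ℝ} (hx : 0 < x) :
    ((x + 1) ^ 2)⁻¹ ≤ x⁻¹ - (x + 1)⁻¹ := by
  rw [inv_sub_inv hx.ne' (by positivity), add_sub_cancel_left, one_div]
  exact inv_anti₀ (by positivity) (by nlinarith)

theorem Real.log_le_sum_Icc_inv (n : ℕ) : Real.log n ≤ ∑ i ∈ Icc 1 n, (i : ℝ)⁻¹ := by
  have h := log_le_harmonic_floor n n.cast_nonneg
  simpa only [Nat.floor_natCast, harmonic_eq_sum_Icc, Rat.cast_sum, Rat.cast_inv,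
    Rat.cast_natCast] using h

theorem Finset.sum_Icc_one_reflect {M : Type*} [AddCommMonoid M] (f : ℕ → M) (n : ℕ) :
    ∑ i ∈ Icc 1 n, f (n + 1 - i) = ∑ i ∈ Icc 1 n, f i := by
  rw [← Ico_add_one_right_eq_Icc, sum_Ico_reflect f 1 (Nat.le_succ _),
    Nat.add_sub_cancel_left, Nat.add_sub_cancel]

noncomputable def nearMinusFar (J : ℕ → ℝ) (L a : ℕ) : ℝ :=
  ∑ i ∈ range L, J (a + i) - ∑' k, J (a + L + k)

section InverseSquare

variable {J : ℕ → ℝ}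

theorem inv_sub_inv_le_sum_range (hJ : ∀ n : ℕ, 1 < n → J n = ((n : ℝ) ^ 2)⁻¹) {a : ℕ}
    (ha : 2 ≤ a) (L : ℕ) :
    (a : ℝ)⁻¹ - ((a + L : ℕ) : ℝ)⁻¹ ≤ ∑ i ∈ range L, J (a + i) := by
  refine (sum_range_sub' (fun i => ((a + i : ℕ) : ℝ)⁻¹) L).symm.le.trans <|
    sum_le_sum fun i _ => ?_
  rw [hJ _ (by omega), ← add_assoc, Nat.cast_succ]
  exact inv_sub_inv_add_one_le_inv_sq (Nat.cast_pos.mpr (by omega))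

theorem tsum_add_le_inv (hJ : ∀ n : ℕ, 1 < n → J n = ((n : ℝ) ^ 2)⁻¹) {m : ℕ}
    (hm : 1 ≤ m) :
    ∑' k, J (m + 1 + k) ≤ (m : ℝ)⁻¹ := by
  refine tsum_le_of_le_sub (u := fun k => ((m + k : ℕ) : ℝ)⁻¹)
    (fun k => by rw [hJ _ (by omega)]; positivity) (fun k => by positivity) fun k => ?_
  rw [add_right_comm, hJ _ (by omega), ← add_assoc, Nat.cast_succ]
  exact inv_add_one_sq_le_inv_sub_inv (Nat.cast_pos.mpr (by omega))

theorem inv_sub_two_mul_inv_le_nearMinusFar (hJ : ∀ n : ℕ, 1 < n → J n = ((n : ℝ) ^ 2)⁻¹)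
    (hJ1 : J 1 = 7) {L a : ℕ} (hL : 1 ≤ L) (ha : 1 ≤ a) :
    (a : ℝ)⁻¹ - 2 * (L : ℝ)⁻¹ + (if a = 1 then 6 else 0) ≤ nearMinusFar J L a := by
  have hLpos : (0 : ℝ) < L := Nat.cast_pos.mpr hL
  have hfar : ∑' k, J (a + L + k) ≤ (L : ℝ)⁻¹ := by
    have h := tsum_add_le_inv hJ (m := a + L - 1) (by omega)
    rw [show a + L - 1 + 1 = a + L by omega] at h
    exact h.trans (inv_anti₀ hLpos (by exact_mod_cast (by omega : L ≤ a + L - 1)))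
  rw [nearMinusFar]
  rcases eq_or_ne a 1 with rfl | ha1
  · have hnear : J 1 ≤ ∑ i ∈ range L, J (1 + i) :=
      single_le_sum (f := fun i => J (1 + i))
        (fun i _ => by
          rcases i with _ | i
          exacts [by simp [hJ1], by rw [hJ _ (by omega)]; positivity])
        (mem_range.mpr hL)
    have hL' : 0 ≤ (L : ℝ)⁻¹ := inv_nonneg.mpr hLpos.le
    rw [if_pos rfl, Nat.cast_one, inv_one]
    linarith
  · have hnear := inv_sub_inv_le_sum_range hJ (by omega : 2 ≤ a) L
    have hnear' : ((a + L : ℕ) : ℝ)⁻¹ ≤ (L : ℝ)⁻¹ :=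
      inv_anti₀ hLpos (by exact_mod_cast (by omega : L ≤ a + L))
    rw [if_neg ha1]
    linarith

theorem log_add_four_le_sum_nearMinusFar (hJ : ∀ n : ℕ, 1 < n → J n = ((n : ℝ) ^ 2)⁻¹)
    (hJ1 : J 1 = 7) {L : ℕ} (hL : 1 ≤ L) :
    Real.log L + 4 ≤ ∑ a ∈ Icc 1 L, nearMinusFar J L a := by
  have hL' : (L : ℝ) ≠ 0 := Nat.cast_ne_zero.mpr (by omega)
  calc Real.log L + 4 ≤ ∑ a ∈ Icc 1 L, (a : ℝ)⁻¹ - L * (2 * (L : ℝ)⁻¹) + 6 := by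
        have h2 : (L : ℝ) * (2 * (L : ℝ)⁻¹) = 2 := by field_simp
        linarith [Real.log_le_sum_Icc_inv L]
    _ = ∑ a ∈ Icc 1 L, ((a : ℝ)⁻¹ - 2 * (L : ℝ)⁻¹ + (if a = 1 then 6 else 0)) := by
        rw [sum_add_distrib, sum_sub_distrib, sum_const, Nat.card_Icc, sum_ite_eq',
          if_pos (mem_Icc.mpr ⟨le_rfl, hL⟩), nsmul_eq_mul, Nat.add_sub_cancel]
    _ ≤ ∑ a ∈ Icc 1 L, nearMinusFar J L a :=
        sum_le_sum fun a ha => inv_sub_two_mul_inv_le_nearMinusFar hJ hJ1 hL (mem_Icc.mp ha).1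

end InverseSquare

theorem flip_summand_eq_nearMinusFar (J : ℕ → ℝ) {L x : ℕ} (hx : x ∈ Icc 1 L) :
    (∑ y ∈ Icc (L + 1) (2 * L), J (y - x)) + (∑ z ∈ Icc 0 (L - 1), J (x + z))
        - (∑' k : ℕ, J (2 * L + 1 + k - x)) - (∑' k : ℕ, J (x + L + k))
      = nearMinusFar J L (L + 1 - x) + nearMinusFar J L x := by
  obtain ⟨hx1, hxL⟩ := mem_Icc.mp hx
  have hright :
      ∑ y ∈ Icc (L + 1) (2 * L), J (y - x) = ∑ i ∈ range L, J (L + 1 - x + i) := by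
    rw [← Ico_add_one_right_eq_Icc, sum_Ico_eq_sum_range, show 2 * L + 1 - (L + 1) = L by omega]
    exact sum_congr rfl fun i _ => congrArg J (by omega)
  have hleft : ∑ z ∈ Icc 0 (L - 1), J (x + z) = ∑ i ∈ range L, J (x + i) := by
    rw [← Ico_add_one_right_eq_Icc, Nat.sub_add_cancel (by omega), ← range_eq_Ico]
  have hright_far : ∑' k : ℕ, J (2 * L + 1 + k - x) = ∑' k : ℕ, J (L + 1 - x + L + k) :=
    tsum_congr fun k => congrArg J (by omega)
  rw [hright, hleft, hright_far, nearMinusFar, nearMinusFar]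
  ring

/-- For `α = 0` (inverse square interaction), there exists `J₁ > 0` so that the
block-flip energy `W_0(L)` is at least `2 ln L + 8` for every `L ≥ 1`. -/
theorem W_zero_log_lower_bound :
    ∃ J₁ : ℝ, 0 < J₁ ∧ ∀ J : ℕ → ℝ, J 1 = J₁ →
      (∀ n : ℕ, 1 < n → J n = (n : ℝ) ^ (-(2 : ℝ))) →
      ∀ L : ℕ, 1 ≤ L →
        ∑ x ∈ Icc 1 L,
          ((∑ y ∈ Icc (L + 1) (2 * L), J (y - x))
            + (∑ z ∈ Icc 0 (L - 1), J (x + z))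
            - (∑' k : ℕ, J (2 * L + 1 + k - x))
            - (∑' k : ℕ, J (x + L + k)))
        ≥ 2 * Real.log L + 8 := by
  refine ⟨7, by norm_num, fun J hJ1 hJ L hL => ?_⟩
  have hJ_inv_sq : ∀ n : ℕ, 1 < n → J n = ((n : ℝ) ^ 2)⁻¹ := fun n hn => by
    rw [hJ n hn, Real.rpow_neg n.cast_nonneg, Real.rpow_two]
  rw [sum_congr rfl fun x hx => flip_summand_eq_nearMinusFar J hx, sum_add_distrib,
    sum_Icc_one_reflect (nearMinusFar J L)]
  linarith [log_add_four_le_sum_nearMinusFar hJ_inv_sq hJ1 hL]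
end

section
/- Let 0 < α ≤ 1/2 and let h(x) = x^α. Let a, b > 0 with b/a sufficiently large. Then for every n ≥ 2 and all reals x₁, …, x_{n−1}, y with 1 ≤ x_i ≤ y, one has b·h(y) + (b−a)·Σ_{i=1}^{n−1} h(x_i) ≥ b·h(y + Σ_{i=1}^{n−1} x_i). -/
/-!
By concavity, `(u + s)^α ≤ u^α + α u^(α-1) s`, and when `s ≤ u` the tangent slope satisfies
`u^(α-1) s ≤ s^(α-1) s = s^α`. Adding the `xᵢ` to `y` one at a time (each `xᵢ ≤ y` is at most
the running total) gives `(y + Σ xᵢ)^α ≤ y^α + α Σ xᵢ^α`. Since `α ≤ 1/2`, the ratio `b/a ≥ 2`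
makes `b α ≤ b - a`, which absorbs the loss.
-/

open Finset

namespace Real

variable {α : ℝ}

theorem rpow_add_le_rpow_add_mul_rpow (hα0 : 0 ≤ α) (hα1 : α ≤ 1) {u s : ℝ} (hs : 0 < s)
    (hsu : s ≤ u) : (u + s) ^ α ≤ u ^ α + α * s ^ α := by
  have hu : 0 < u := hs.trans_le hsu
  have hslope : u ^ (α - 1) * s ≤ s ^ α := by
    calc u ^ (α - 1) * s ≤ s ^ (α - 1) * s :=
          mul_le_mul_of_nonneg_right (rpow_le_rpow_of_nonpos hs hsu (by linarith)) hs.le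
      _ = s ^ α := by rw [rpow_sub_one hs.ne', div_mul_cancel₀ _ hs.ne']
  calc (u + s) ^ α = u ^ α * (1 + s / u) ^ α := by
        rw [← mul_rpow hu.le (by positivity), mul_add, mul_one, mul_div_cancel₀ _ hu.ne']
    _ ≤ u ^ α * (1 + α * (s / u)) := by
        gcongr
        exact rpow_one_add_le_one_add_mul_self (s := s / u) (by linarith [div_pos hs hu]) hα0 hα1
    _ = u ^ α + α * (u ^ (α - 1) * s) := by rw [rpow_sub_one hu.ne']; ring
    _ ≤ u ^ α + α * s ^ α := by gcongr

theorem rpow_add_sum_le {ι : Type*} (hα0 : 0 ≤ α) (hα1 : α ≤ 1) (s : Finset ι) (x : ι → ℝ)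
    (y : ℝ) (hx : ∀ i ∈ s, 0 < x i ∧ x i ≤ y) :
    (y + ∑ i ∈ s, x i) ^ α ≤ y ^ α + α * ∑ i ∈ s, x i ^ α := by
  induction s using Finset.cons_induction with
  | empty => simp
  | cons j t hj ih =>
    have hxt : ∀ i ∈ t, 0 < x i ∧ x i ≤ y := fun i hi => hx i (mem_cons_of_mem hi)
    obtain ⟨hxj0, hxjy⟩ := hx j (mem_cons_self j t)
    have hxj_le : x j ≤ y + ∑ i ∈ t, x i := by
      linarith [sum_nonneg fun i hi => (hxt i hi).1.le]
    calc (y + ∑ i ∈ cons j t hj, x i) ^ α = (y + ∑ i ∈ t, x i + x j) ^ α := by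
          rw [sum_cons]; ring_nf
      _ ≤ (y + ∑ i ∈ t, x i) ^ α + α * x j ^ α :=
          rpow_add_le_rpow_add_mul_rpow hα0 hα1 hxj0 hxj_le
      _ ≤ y ^ α + α * ∑ i ∈ cons j t hj, x i ^ α := by
          rw [sum_cons]; linarith [ih hxt]

end Real

/-- Superadditivity with loss for `h(x) = x^α`, `α ∈ (0,1/2]`: for `b/a` large
enough, `b h(y) + (b−a) Σ h(xᵢ) ≥ b h(y + Σ xᵢ)` whenever `1 ≤ xᵢ ≤ y`. -/
theorem superadditivity_with_loss (α : ℝ) (hα0 : 0 < α) (hα : α ≤ 1 / 2) :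
    ∃ C : ℝ, 0 < C ∧ ∀ a b : ℝ, 0 < a → 0 < b → C ≤ b / a →
      ∀ n : ℕ, 2 ≤ n → ∀ (x : Fin (n - 1) → ℝ) (y : ℝ),
        (∀ i, 1 ≤ x i ∧ x i ≤ y) →
        b * y ^ α + (b - a) * ∑ i, (x i) ^ α
          ≥ b * (y + ∑ i, x i) ^ α := by
  refine ⟨2, two_pos, fun a b ha hb hC n _ x y hx => ?_⟩
  have hab : 2 * a ≤ b := (le_div_iff₀ ha).mp hC
  have hconcave := Real.rpow_add_sum_le hα0.le (by linarith) univ x y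
    fun i _ => ⟨one_pos.trans_le (hx i).1, (hx i).2⟩
  have hloss : b * α ≤ b - a := by nlinarith
  have hsum : 0 ≤ ∑ i, x i ^ α :=
    sum_nonneg fun i _ => Real.rpow_nonneg (zero_le_one.trans (hx i).1) α
  calc b * (y + ∑ i, x i) ^ α ≤ b * (y ^ α + α * ∑ i, x i ^ α) := by gcongr
    _ = b * y ^ α + b * α * ∑ i, x i ^ α := by ring
    _ ≤ b * y ^ α + (b - a) * ∑ i, x i ^ α := by gcongr
end

section
/- Arrow equivalence: let S₁ ≺ S₂ ≺ … ≺ S_n be a sequence of disjoint intervals ('squares') on ℝ, each with a mass |Sᵢ| > 0. Define an 'old arrow' from S to S' if |S| ≤ |S'| (with ties broken by left-to-right order) and dist(S,S') ≤ c|S|³. Define 'new arrows' by keeping, for each square and each direction (left/right), only the old arrow to the nearest target and erasing the rest. Then a set of squares is connected under new arrows (as undirected edges) if and only if it is connected under old arrows. -/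
/-- Number of integer points strictly between `u` and `v`. -/
noncomputable def intGap (u v : ℝ) : ℕ :=
  (Set.Ioo u v ∩ Set.range ((↑) : ℤ → ℝ)).ncard

/-- Distance between the squares `i` and `j` (intervals `[a i, b i]`, ordered
left to right): the number of integer points strictly between them. -/
noncomputable def sqDist {n : ℕ} (a b : Fin n → ℝ) (i j : Fin n) : ℕ :=
  if i < j then intGap (b i) (a j) else intGap (b j) (a i)

/-- Old arrow from square `i` to square `j`: `|Sᵢ| ≤ |Sⱼ|` (ties broken by the
left-to-right order) and `dist(Sᵢ,Sⱼ) ≤ c |Sᵢ|³`. -/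
noncomputable def oldArrow {n : ℕ} (a b : Fin n → ℝ) (m : Fin n → ℕ) (c : ℝ)
    (i j : Fin n) : Prop :=
  (m i < m j ∨ (m i = m j ∧ i < j)) ∧
    (sqDist a b i j : ℝ) ≤ c * (m i : ℝ) ^ 3

/-- New arrow: an old arrow from `i` to `j` which is minimal in its direction,
i.e. there is no old arrow from `i` to a square strictly between `i` and `j`. -/
noncomputable def newArrow {n : ℕ} (a b : Fin n → ℝ) (m : Fin n → ℕ) (c : ℝ)
    (i j : Fin n) : Prop :=
  oldArrow a b m c i j ∧
    ∀ k : Fin n, ((i < k ∧ k < j) ∨ (j < k ∧ k < i)) → ¬ oldArrow a b m c i k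

/-!
An old arrow `i → j` that is not new is split at the target `k` of an old arrow `i → k` with `k`
strictly between `i` and `j`: `k` and `j` are then joined by an old arrow (in one direction or
the other), because their distance is at most that of `i` and `j` while both are at least as heavy
as `i`. Both pieces are shorter, so induction on the number of squares spanned by an arrow turns
every old arrow into a chain of new ones.
-/

open Relation Finset

section Nearest

variable {α : Type*} [LinearOrder α]

def nearest (r : α → α → Prop) (i j : α) : Prop :=
  r i j ∧ ∀ k, ((i < k ∧ k < j) ∨ (j < k ∧ k < i)) → ¬ r i k

theorem card_uIcc_lt_of_between [LocallyFiniteOrder α] {i j k : α}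
    (hk : (i < k ∧ k < j) ∨ (j < k ∧ k < i)) :
    #(uIcc i k) < #(uIcc i j) ∧ #(uIcc k j) < #(uIcc i j) := by
  have hk' : k ∈ uIcc i j := by
    rcases hk with ⟨h₁, h₂⟩ | ⟨h₁, h₂⟩ <;> simp [mem_uIcc, h₁.le, h₂.le]
  refine ⟨card_lt_card ((ssubset_iff_of_subset (uIcc_subset_uIcc_left hk')).2
      ⟨j, right_mem_uIcc, ?_⟩),
    card_lt_card ((ssubset_iff_of_subset (uIcc_subset_uIcc_right hk')).2 ⟨i, left_mem_uIcc, ?_⟩)⟩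
  all_goals rcases hk with ⟨h₁, h₂⟩ | ⟨h₁, h₂⟩ <;> simp [h₁.le, h₂.le, h₁.not_ge, h₂.not_ge]

theorem symmGen_le_reflTransGen_symmGen_nearest [LocallyFiniteOrder α] {r : α → α → Prop}
    (hsplit : ∀ ⦃i j k⦄, r i j → r i k → ((i < k ∧ k < j) ∨ (j < k ∧ k < i)) →
      SymmGen r k j) :
    SymmGen r ≤ ReflTransGen (SymmGen (nearest r)) := by
  suffices h : ∀ N i j, #(uIcc i j) = N → r i j → ReflTransGen (SymmGen (nearest r)) i j by
    rintro i j (hij | hji)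
    · exact h _ i j rfl hij
    · exact Std.Symm.symm _ _ (h _ j i rfl hji)
  intro N
  induction N using Nat.strong_induction_on with
  | _ N ih =>
  rintro i j rfl hij
  by_cases hk : ∃ k, ((i < k ∧ k < j) ∨ (j < k ∧ k < i)) ∧ r i k
  · obtain ⟨k, hk, hik⟩ := hk
    have ⟨hcard_ik, hcard_kj⟩ := card_uIcc_lt_of_between hk
    refine (ih _ hcard_ik i k rfl hik).trans ?_
    rcases hsplit hij hik hk with hkj | hjk
    · exact ih _ hcard_kj k j rfl hkj
    · rw [uIcc_comm] at hcard_kj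
      exact Std.Symm.symm _ _ (ih _ hcard_kj j k rfl hjk)
  · push Not at hk
    exact .single (.of_rel ⟨hij, hk⟩)

theorem reflTransGen_symmGen_nearest_iff [LocallyFiniteOrder α] {r : α → α → Prop}
    (hsplit : ∀ ⦃i j k⦄, r i j → r i k → ((i < k ∧ k < j) ∨ (j < k ∧ k < i)) →
      SymmGen r k j) (i j : α) :
    ReflTransGen (SymmGen (nearest r)) i j ↔ ReflTransGen (SymmGen r) i j :=
  ⟨ReflTransGen.mono (fun _ _ => Or.imp And.left And.left) i j,
    reflTransGen_closed (symmGen_le_reflTransGen_symmGen_nearest hsplit) i j⟩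

end Nearest

theorem intGap_finite (u v : ℝ) : (Set.Ioo u v ∩ Set.range ((↑) : ℤ → ℝ)).Finite := by
  refine ((Set.finite_Icc ⌈u⌉ ⌊v⌋).image ((↑) : ℤ → ℝ)).subset ?_
  rintro x ⟨⟨hu, hv⟩, z, rfl⟩
  exact ⟨z, ⟨Int.ceil_le.2 hu.le, Int.le_floor.2 hv.le⟩, rfl⟩

theorem intGap_le_intGap {u u' v v' : ℝ} (hu : u ≤ u') (hv : v' ≤ v) :
    intGap u' v' ≤ intGap u v :=
  Set.ncard_le_ncard (Set.inter_subset_inter_left _ (Set.Ioo_subset_Ioo hu hv))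
    (intGap_finite u v)

section Squares

variable {n : ℕ} {a b : Fin n → ℝ}

theorem sqDist_comm (i j : Fin n) : sqDist a b i j = sqDist a b j i := by
  rcases lt_trichotomy i j with h | rfl | h
  · rw [sqDist, if_pos h, sqDist, if_neg h.asymm]
  · rfl
  · rw [sqDist, if_neg h.asymm, sqDist, if_pos h]

theorem sqDist_le_of_between (hab : ∀ i, a i ≤ b i)
    (horder : ∀ i j : Fin n, i < j → b i < a j) {i j k : Fin n}
    (hk : (i < k ∧ k < j) ∨ (j < k ∧ k < i)) :
    sqDist a b k j ≤ sqDist a b i j := by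
  rcases hk with ⟨hik, hkj⟩ | ⟨hjk, hki⟩
  · rw [sqDist, if_pos hkj, sqDist, if_pos (hik.trans hkj)]
    exact intGap_le_intGap ((horder i k hik).le.trans (hab k)) le_rfl
  · rw [sqDist, if_neg hjk.asymm, sqDist, if_neg (hjk.trans hki).asymm]
    exact intGap_le_intGap le_rfl ((hab k).trans (horder k i hki).le)

variable {m : Fin n → ℕ} {c : ℝ}

theorem oldArrow.mass_le {i j : Fin n} (h : oldArrow a b m c i j) : m i ≤ m j :=
  h.1.elim le_of_lt fun h => h.1.le

theorem oldArrow_symmGen_of_between (hab : ∀ i, a i ≤ b i)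
    (horder : ∀ i j : Fin n, i < j → b i < a j) (hc : 0 < c) ⦃i j k : Fin n⦄
    (hij : oldArrow a b m c i j) (hik : oldArrow a b m c i k)
    (hk : (i < k ∧ k < j) ∨ (j < k ∧ k < i)) :
    SymmGen (oldArrow a b m c) k j := by
  have hdist : (sqDist a b k j : ℝ) ≤ c * (m i : ℝ) ^ 3 :=
    (Nat.cast_le.2 (sqDist_le_of_between hab horder hk)).trans hij.2
  have hbound {l : Fin n} (hil : oldArrow a b m c i l) :
      c * (m i : ℝ) ^ 3 ≤ c * (m l : ℝ) ^ 3 := by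
    have := hil.mass_le
    gcongr
  have hkj : k ≠ j := by rcases hk with ⟨_, h⟩ | ⟨h, _⟩ <;> [exact h.ne; exact h.ne']
  rcases lt_trichotomy (toLex (m k, k)) (toLex (m j, j)) with h | h | h
  · exact .of_rel ⟨Prod.Lex.toLex_lt_toLex.1 h, hdist.trans (hbound hik)⟩
  · exact absurd (congrArg Prod.snd (toLex.injective h)) hkj
  · refine .of_rel_symm ⟨Prod.Lex.toLex_lt_toLex.1 h, ?_⟩
    rw [sqDist_comm]
    exact hdist.trans (hbound hij)

end Squares

theorem new_connected_iff_old_connected_general (n : ℕ) (a b : Fin n → ℝ)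
    (hab : ∀ i, a i ≤ b i) (horder : ∀ i j : Fin n, i < j → b i < a j)
    (m : Fin n → ℕ) (c : ℝ) (hc : 0 < c) :
    ∀ i j : Fin n,
      Relation.ReflTransGen
          (fun u v => newArrow a b m c u v ∨ newArrow a b m c v u) i j ↔
        Relation.ReflTransGen
          (fun u v => oldArrow a b m c u v ∨ oldArrow a b m c v u) i j :=
  reflTransGen_symmGen_nearest_iff (oldArrow_symmGen_of_between hab horder hc)

/-- Arrow equivalence (Lemma D.1): connectivity under new arrows coincides with
connectivity under old arrows. -/
theorem new_connected_iff_old_connected (n : ℕ) (a b : Fin n → ℝ)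
    (hab : ∀ i, a i ≤ b i) (horder : ∀ i j : Fin n, i < j → b i < a j)
    (m : Fin n → ℕ) (hm : ∀ i, 0 < m i) (c : ℝ) (hc : 0 < c) :
    ∀ i j : Fin n,
      Relation.ReflTransGen
          (fun u v => newArrow a b m c u v ∨ newArrow a b m c v u) i j ↔
        Relation.ReflTransGen
          (fun u v => oldArrow a b m c u v ∨ oldArrow a b m c v u) i j :=
  new_connected_iff_old_connected_general n a b hab horder m c hc
end
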